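/- For every natural number n, sum_{k=0}^{n} (-1)^k q^(2n-k) q^(k(k-1)/2) / ((q;q)_k (q^2;q^2)_{n-k}) = (-1)^n q^(n^2) / (q^2;q^2)_n, as an identity of rational functions in q. Combining with the companion identity, sum_{k=0}^{n} (-1)^k (1 - q^(2n-k)) q^(k(k-1)/2) / ((q;q)_k (q^2;q^2)_{n-k}) = 0. -/

import Mathlib

noncomputable section
open Finset PowerSeries

abbrev Fq : Type := RatFunc ℚ

/-- The variable `q` as element of the field of rational functions `ℚ(q)`. -/
def qv : Fq := RatFunc.X

/-- The q-integer `[m]_q = 1 + q + ... + q^(m-1)`. -/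
def qInt (x : Fq) (m : ℕ) : Fq := ∑ i ∈ Finset.range m, x ^ i

/-- The q-factorial `[m]_q! = [1]_q [2]_q ⋯ [m]_q`. -/
def qFact (x : Fq) (m : ℕ) : Fq := ∏ i ∈ Finset.range m, qInt x (i + 1)

/-- The q-Pochhammer symbol `(x;r)_m = (1-x)(1-xr)⋯(1-xr^(m-1))`. -/
def qPoch (x r : Fq) (m : ℕ) : Fq := ∏ j ∈ Finset.range m, (1 - x * r ^ j)

/-!
Write `T n k = (-1)^k q^(k(k-1)/2) / ((q;q)_k (q²;q²)_(n-k))`. Cancelling the last factor of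
`(q;q)_(k+1)` gives `(1 - q^(k+1)) T (n+1) (k+1) = -q^k T n k`, and cancelling the last factor of
`(q²;q²)_(n+1-k)` gives `(1 - q^(2(n+1-k))) T (n+1) k = T n k`. Splitting
`1 - q^(2n-k) = (1 - q^k) + q^k (1 - q^(2(n-k)))`, these two relations make the companion sum
telescope to `(1 - q^0) T n 0 = 0`. Hence `∑ₖ q^(2n-k) T n k = ∑ₖ T n k =: A n`, and the first relation
turns this into `(1 - q^(2n+2)) A (n+1) = -q^(2n+1) A n`, whose solution is
`A n = (-1)^n q^(n²) / (q²;q²)_n`.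
-/

namespace EulerTypeSum

lemma qPoch_zero (x r : Fq) : qPoch x r 0 = 1 := by
  simp [qPoch]

lemma qPoch_succ (x r : Fq) (m : ℕ) : qPoch x r (m + 1) = qPoch x r m * (1 - x * r ^ m) :=
  Finset.prod_range_succ _ _

lemma not_isOfFinOrder_qv : ¬IsOfFinOrder qv := by
  rw [isOfFinOrder_iff_pow_eq_one]
  rintro ⟨s, hs, h⟩
  have hdeg := congrArg RatFunc.intDegree h
  rw [qv, ← RatFunc.algebraMap_X, ← map_pow, RatFunc.intDegree_polynomial,
    RatFunc.intDegree_one, Polynomial.natDegree_X_pow] at hdeg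
  omega

def eulerTerm (q : Fq) (n k : ℕ) : Fq :=
  (-1) ^ k * q ^ (k * (k - 1) / 2) / (qPoch q q k * qPoch (q ^ 2) (q ^ 2) (n - k))

def eulerSum (q : Fq) (n : ℕ) : Fq :=
  ∑ k ∈ Finset.range (n + 1), eulerTerm q n k

lemma choose_two_succ (k : ℕ) : (k + 1) * (k + 1 - 1) / 2 = k * (k - 1) / 2 + k := by
  rw [← Nat.choose_two_right, ← Nat.choose_two_right, Nat.choose_succ_succ, Nat.choose_one_right,
    add_comm]

section

variable {q : Fq} (hq : ¬IsOfFinOrder q)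
include hq

lemma one_sub_pow_ne_zero {s : ℕ} (hs : s ≠ 0) : 1 - q ^ s ≠ 0 := fun h =>
  hq (isOfFinOrder_iff_pow_eq_one.2 ⟨s, Nat.pos_of_ne_zero hs, (sub_eq_zero.1 h).symm⟩)

lemma qPoch_self_ne_zero (k : ℕ) : qPoch q q k ≠ 0 :=
  Finset.prod_ne_zero_iff.2 fun j _ => by
    rw [← pow_succ']
    exact one_sub_pow_ne_zero hq j.succ_ne_zero

lemma qPoch_sq_ne_zero (m : ℕ) : qPoch (q ^ 2) (q ^ 2) m ≠ 0 :=
  Finset.prod_ne_zero_iff.2 fun j _ => by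
    rw [← pow_mul, ← pow_add]
    exact one_sub_pow_ne_zero hq (by omega)

lemma one_sub_pow_succ_mul_eulerTerm_succ (n k : ℕ) :
    (1 - q ^ (k + 1)) * eulerTerm q (n + 1) (k + 1) = -(q ^ k * eulerTerm q n k) := by
  have hP := qPoch_self_ne_zero hq k
  have hQ := qPoch_sq_ne_zero hq (n - k)
  have hk := one_sub_pow_ne_zero hq k.succ_ne_zero
  rw [eulerTerm, eulerTerm, choose_two_succ, Nat.add_sub_add_right, qPoch_succ, ← pow_succ']
  field_simp
  ring

lemma one_sub_pow_mul_eulerTerm_succ_left {n k : ℕ} (hk : k ≤ n) :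
    (1 - q ^ (2 * (n + 1 - k))) * eulerTerm q (n + 1) k = eulerTerm q n k := by
  have hP := qPoch_self_ne_zero hq k
  have hQ := qPoch_sq_ne_zero hq (n - k)
  have hsub : n + 1 - k = n - k + 1 := by omega
  have hnk := one_sub_pow_ne_zero hq (by omega : 2 * (n - k + 1) ≠ 0)
  have hpow : q ^ 2 * (q ^ 2) ^ (n - k) = q ^ (2 * (n - k + 1)) := by ring
  rw [eulerTerm, eulerTerm, hsub, qPoch_succ, hpow]
  field_simp

lemma one_sub_pow_mul_eulerTerm_eq_sub {n k : ℕ} (hk : k < n) :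
    (1 - q ^ (2 * n - k)) * eulerTerm q n k =
      (1 - q ^ k) * eulerTerm q n k - (1 - q ^ (k + 1)) * eulerTerm q n (k + 1) := by
  obtain ⟨m, rfl⟩ : ∃ m, n = m + 1 := ⟨n - 1, by omega⟩
  have hsplit : q ^ (2 * (m + 1) - k) = q ^ k * q ^ (2 * (m + 1 - k)) := by
    rw [← pow_add]
    congr 1
    omega
  rw [one_sub_pow_succ_mul_eulerTerm_succ hq,
    ← one_sub_pow_mul_eulerTerm_succ_left hq (by omega : k ≤ m), hsplit]
  ring

lemma sum_one_sub_pow_mul_eulerTerm (n : ℕ) :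
    ∑ k ∈ Finset.range (n + 1), (1 - q ^ (2 * n - k)) * eulerTerm q n k = 0 := by
  set H : ℕ → Fq := fun k => (1 - q ^ k) * eulerTerm q n k
  have hlast : (1 - q ^ (2 * n - n)) * eulerTerm q n n = H n := by
    simp only [H, show 2 * n - n = n by omega]
  rw [Finset.sum_range_succ, hlast,
    Finset.sum_congr rfl fun k hk => one_sub_pow_mul_eulerTerm_eq_sub hq (Finset.mem_range.1 hk),
    Finset.sum_range_sub' H]
  simp [H]

lemma sum_pow_mul_eulerTerm (n : ℕ) :
    ∑ k ∈ Finset.range (n + 1), q ^ (2 * n - k) * eulerTerm q n k = eulerSum q n := by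
  refine (sub_eq_zero.1 ?_).symm
  rw [eulerSum, ← Finset.sum_sub_distrib, ← sum_one_sub_pow_mul_eulerTerm hq n]
  exact Finset.sum_congr rfl fun k _ => by ring

lemma one_sub_pow_mul_eulerSum_succ (n : ℕ) :
    (1 - q ^ (2 * n + 2)) * eulerSum q (n + 1) = -(q ^ (2 * n + 1) * eulerSum q n) := by
  have hterm : ∀ k ∈ Finset.range (n + 1),
      (q ^ (2 * (n + 1) - (k + 1)) - q ^ (2 * n + 2)) * eulerTerm q (n + 1) (k + 1) =
        -(q ^ (2 * n + 1) * eulerTerm q n k) := fun k hk => by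
    have hkn := Finset.mem_range.1 hk
    have hsplit : q ^ (2 * n + 2) = q ^ (2 * (n + 1) - (k + 1)) * q ^ (k + 1) := by
      rw [← pow_add]
      congr 1
      omega
    have hexp : q ^ (2 * n + 1) = q ^ (2 * (n + 1) - (k + 1)) * q ^ k := by
      rw [← pow_add]
      congr 1
      omega
    rw [hsplit, hexp]
    linear_combination q ^ (2 * (n + 1) - (k + 1)) * one_sub_pow_succ_mul_eulerTerm_succ hq n k
  calc (1 - q ^ (2 * n + 2)) * eulerSum q (n + 1)
      = ∑ k ∈ Finset.range (n + 2),
          (q ^ (2 * (n + 1) - k) - q ^ (2 * n + 2)) * eulerTerm q (n + 1) k := by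
        rw [sub_mul, one_mul]
        nth_rw 1 [← sum_pow_mul_eulerTerm hq]
        rw [eulerSum, Finset.mul_sum, ← Finset.sum_sub_distrib]
        exact Finset.sum_congr rfl fun k _ => by ring
    _ = -(q ^ (2 * n + 1) * eulerSum q n) := by
        rw [Finset.sum_range_succ', Finset.sum_congr rfl hterm, eulerSum, Finset.mul_sum,
          Finset.sum_neg_distrib, show 2 * (n + 1) - 0 = 2 * n + 2 by omega, sub_self, zero_mul,
          add_zero]

lemma eulerSum_eq (n : ℕ) : eulerSum q n = (-1) ^ n * q ^ (n ^ 2) / qPoch (q ^ 2) (q ^ 2) n := by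
  induction n with
  | zero => simp [eulerSum, eulerTerm, qPoch_zero]
  | succ n ih =>
    have hrec := one_sub_pow_mul_eulerSum_succ hq n
    have hQ := qPoch_sq_ne_zero hq n
    have hn := one_sub_pow_ne_zero hq (by omega : 2 * n + 2 ≠ 0)
    have hpow : q ^ 2 * (q ^ 2) ^ n = q ^ (2 * n + 2) := by ring
    rw [ih] at hrec
    rw [qPoch_succ, hpow, eq_div_iff (mul_ne_zero hQ hn)]
    field_simp at hrec
    linear_combination hrec

end

end EulerTypeSum

open EulerTypeSum in
theorem euler_type_sum_companion (n : ℕ) :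
    (∑ k ∈ Finset.range (n + 1),
        (-1 : Fq) ^ k * qv ^ (2 * n - k) * qv ^ (k * (k - 1) / 2) /
          (qPoch qv qv k * qPoch (qv ^ 2) (qv ^ 2) (n - k)) =
      (-1 : Fq) ^ n * qv ^ (n ^ 2) / qPoch (qv ^ 2) (qv ^ 2) n) ∧
    (∑ k ∈ Finset.range (n + 1),
        (-1 : Fq) ^ k * (1 - qv ^ (2 * n - k)) * qv ^ (k * (k - 1) / 2) /
          (qPoch qv qv k * qPoch (qv ^ 2) (qv ^ 2) (n - k)) = 0) := by
  constructor
  · rw [← eulerSum_eq not_isOfFinOrder_qv, ← sum_pow_mul_eulerTerm not_isOfFinOrder_qv]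
    exact Finset.sum_congr rfl fun k _ => by rw [eulerTerm]; ring
  · rw [← sum_one_sub_pow_mul_eulerTerm not_isOfFinOrder_qv n]
    exact Finset.sum_congr rfl fun k _ => by rw [eulerTerm]; ring
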